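/- arXiv:2306.14602 — 2 statements merged into one kernel-verified Lean document; each statement's English description precedes it below -/
import Mathlib

section
/- Let α > 0, σ₀ > 0 and ρ ∈ ℝ. With A(T) = 4α²σ₀⁴·( e^{6α²T}T³/(12α²) + T²/(36α⁴) − (e^{6α²T}−1)T/(216α⁶) ), B(T) = 2α²σ₀³·( e^{3α²T}T/(2α⁴) − (e^{3α²T}−e^{α²T})/(4α⁶) − e^{3α²T}T/(3α⁴) + (e^{3α²T}−1)/(9α⁶) ), C(T) = 4α²σ₀²·( e^{α²T}T²/(2α²) − e^{α²T}T/α⁴ + (e^{α²T}−1)/α⁶ ), and D(T) = 2ασ₀²·( e^{α²T}T/α² − (e^{α²T}−1)/α⁴ ), one has lim_{T→0⁺} [ (3ρ²/(8σ₀³T⁴))·A(T) − (ρ²/(2σ₀²T³))·B(T) − (ρ²/(2σ₀T³))·C(T) + (ρ/(4T²))·D(T) ] = ρασ₀²/4. In particular, for ρ < 0 this limit is strictly negative. -/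
/-!
Each of `A/T⁴`, `B/T³`, `C/T³`, `D/T²` has a finite limit as `T → 0`: writing every exponential
as its Taylor polynomial plus a remainder `o(Tⁿ)` of the right order, the low-order terms cancel
and what is left is a combination of the normalized remainders `(e^{cT} - Σ_{i<n} (cT)ⁱ/i!)/Tⁿ → cⁿ/n!`.
The prefactors in the statement turn these into limits `ρ²α²σ₀/2`, `ρ²α²σ₀/6`, `ρ²α²σ₀/3` and
`ρασ₀²/4`; the first three cancel.
-/

open Real Filter Topology Nat

theorem tendsto_exp_mul_sub_sum_range_div_pow (c : ℝ) (n : ℕ) :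
    Tendsto (fun T ↦ (exp (c * T) - ∑ i ∈ Finset.range n, (c * T) ^ i / i !) / T ^ n)
      (𝓝[≠] 0) (𝓝 (c ^ n / n !)) := by
  have hcT : Tendsto (fun T : ℝ ↦ c * T) (𝓝 0) (𝓝 0) := by
    simpa using (continuous_const_mul c).tendsto 0
  have hrem : (fun T ↦ exp (c * T) - ∑ i ∈ Finset.range (n + 1), (c * T) ^ i / i !)
      =o[𝓝 0] (· ^ n) :=
    ((exp_sub_sum_range_succ_isLittleO_pow n).comp_tendsto hcT).trans_isBigO <| by
      simpa only [Function.comp_def, mul_pow] using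
        (Asymptotics.isBigO_refl (· ^ n) (𝓝 (0 : ℝ))).const_mul_left (c ^ n)
  have hlim := (hrem.tendsto_div_nhds_zero.mono_left (nhdsWithin_le_nhds (s := {0}ᶜ))).const_add
    (c ^ n / n !)
  rw [add_zero] at hlim
  refine hlim.congr' ?_
  filter_upwards [self_mem_nhdsWithin] with T hT
  rw [Finset.sum_range_succ]
  field_simp [pow_ne_zero n (show T ≠ 0 from hT)]
  ring

namespace SABR

/- The closed forms of Alòs–Shiraya, Theorem 4.2, for the lognormal SABR model with vol-of-vol `α`
and initial volatility `σ₀`: `A` bounds `T₁`, and `B`, `C`, `D` are `T₂`, `T₃`, `T₄`. -/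

noncomputable def A (α σ₀ T : ℝ) : ℝ :=
  4 * α ^ 2 * σ₀ ^ 4 *
    (exp (6 * α ^ 2 * T) * T ^ 3 / (12 * α ^ 2) + T ^ 2 / (36 * α ^ 4)
      - (exp (6 * α ^ 2 * T) - 1) * T / (216 * α ^ 6))

noncomputable def B (α σ₀ T : ℝ) : ℝ :=
  2 * α ^ 2 * σ₀ ^ 3 *
    (exp (3 * α ^ 2 * T) * T / (2 * α ^ 4)
      - (exp (3 * α ^ 2 * T) - exp (α ^ 2 * T)) / (4 * α ^ 6)
      - exp (3 * α ^ 2 * T) * T / (3 * α ^ 4)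
      + (exp (3 * α ^ 2 * T) - 1) / (9 * α ^ 6))

noncomputable def C (α σ₀ T : ℝ) : ℝ :=
  4 * α ^ 2 * σ₀ ^ 2 *
    (exp (α ^ 2 * T) * T ^ 2 / (2 * α ^ 2) - exp (α ^ 2 * T) * T / α ^ 4
      + (exp (α ^ 2 * T) - 1) / α ^ 6)

noncomputable def D (α σ₀ T : ℝ) : ℝ :=
  2 * α * σ₀ ^ 2 * (exp (α ^ 2 * T) * T / α ^ 2 - (exp (α ^ 2 * T) - 1) / α ^ 4)

variable {α : ℝ} (hα : α ≠ 0) (σ₀ : ℝ)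
include hα

theorem tendsto_A_div_pow_four :
    Tendsto (fun T ↦ A α σ₀ T / T ^ 4) (𝓝[≠] 0) (𝓝 (4 * α ^ 2 * σ₀ ^ 4 / 3)) := by
  have h1 := tendsto_exp_mul_sub_sum_range_div_pow (6 * α ^ 2) 1
  have h4 := tendsto_exp_mul_sub_sum_range_div_pow (6 * α ^ 2) 4
  have hT : Tendsto (fun T : ℝ ↦ T) (𝓝[≠] 0) (𝓝 0) := tendsto_nhdsWithin_of_tendsto_nhds tendsto_id
  convert ((((h1.div_const (12 * α ^ 2)).sub_const (1 / 6)).sub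
    ((hT.mul h4).div_const (216 * α ^ 6))).const_mul (4 * α ^ 2 * σ₀ ^ 4)).congr' ?_ using 2
  · push_cast [Nat.factorial]
    field_simp
    ring
  · filter_upwards [self_mem_nhdsWithin] with T hT
    push_cast [A, Finset.sum_range_succ, Finset.sum_range_zero, Nat.factorial]
    field_simp [show T ≠ 0 from hT]
    ring

theorem tendsto_B_div_pow_three :
    Tendsto (fun T ↦ B α σ₀ T / T ^ 3) (𝓝[≠] 0) (𝓝 (α ^ 2 * σ₀ ^ 3 / 3)) := by
  have h2 := tendsto_exp_mul_sub_sum_range_div_pow (3 * α ^ 2) 2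
  have h3 := tendsto_exp_mul_sub_sum_range_div_pow (3 * α ^ 2) 3
  have h3' := tendsto_exp_mul_sub_sum_range_div_pow (α ^ 2) 3
  convert ((((h2.div_const (6 * α ^ 4)).sub (h3.mul_const (5 / (36 * α ^ 6)))).add
    (h3'.div_const (4 * α ^ 6))).const_mul (2 * α ^ 2 * σ₀ ^ 3)).congr' ?_ using 2
  · push_cast [Nat.factorial]
    field_simp
    ring
  · filter_upwards [self_mem_nhdsWithin] with T hT
    push_cast [B, Finset.sum_range_succ, Finset.sum_range_zero, Nat.factorial]
    field_simp [show T ≠ 0 from hT]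
    ring

theorem tendsto_C_div_pow_three :
    Tendsto (fun T ↦ C α σ₀ T / T ^ 3) (𝓝[≠] 0) (𝓝 (2 * α ^ 2 * σ₀ ^ 2 / 3)) := by
  have h1 := tendsto_exp_mul_sub_sum_range_div_pow (α ^ 2) 1
  have h2 := tendsto_exp_mul_sub_sum_range_div_pow (α ^ 2) 2
  have h3 := tendsto_exp_mul_sub_sum_range_div_pow (α ^ 2) 3
  convert ((((h1.div_const (2 * α ^ 2)).sub (h2.div_const (α ^ 4))).add
    (h3.div_const (α ^ 6))).const_mul (4 * α ^ 2 * σ₀ ^ 2)).congr' ?_ using 2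
  · push_cast [Nat.factorial]
    field_simp
    ring
  · filter_upwards [self_mem_nhdsWithin] with T hT
    push_cast [C, Finset.sum_range_succ, Finset.sum_range_zero, Nat.factorial]
    field_simp [show T ≠ 0 from hT]
    ring

theorem tendsto_D_div_sq :
    Tendsto (fun T ↦ D α σ₀ T / T ^ 2) (𝓝[≠] 0) (𝓝 (α * σ₀ ^ 2)) := by
  have h1 := tendsto_exp_mul_sub_sum_range_div_pow (α ^ 2) 1
  have h2 := tendsto_exp_mul_sub_sum_range_div_pow (α ^ 2) 2
  convert (((h1.div_const (α ^ 2)).sub (h2.div_const (α ^ 4))).const_mul (2 * α * σ₀ ^ 2)).congr' ?_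
    using 2
  · push_cast [Nat.factorial]
    field_simp
    ring
  · filter_upwards [self_mem_nhdsWithin] with T hT
    push_cast [D, Finset.sum_range_succ, Finset.sum_range_zero, Nat.factorial]
    field_simp [show T ≠ 0 from hT]
    ring

end SABR

theorem ATMI_lower_bound_limit (α σ₀ ρ : ℝ) (hα : 0 < α) (hσ : 0 < σ₀) :
    (Tendsto
      (fun T : ℝ =>
        (3 * ρ ^ 2 / (8 * σ₀ ^ 3 * T ^ 4)) *
            (4 * α ^ 2 * σ₀ ^ 4 *
              (exp (6 * α ^ 2 * T) * T ^ 3 / (12 * α ^ 2) + T ^ 2 / (36 * α ^ 4)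
                - (exp (6 * α ^ 2 * T) - 1) * T / (216 * α ^ 6)))
          - (ρ ^ 2 / (2 * σ₀ ^ 2 * T ^ 3)) *
              (2 * α ^ 2 * σ₀ ^ 3 *
                (exp (3 * α ^ 2 * T) * T / (2 * α ^ 4)
                  - (exp (3 * α ^ 2 * T) - exp (α ^ 2 * T)) / (4 * α ^ 6)
                  - exp (3 * α ^ 2 * T) * T / (3 * α ^ 4)
                  + (exp (3 * α ^ 2 * T) - 1) / (9 * α ^ 6)))
          - (ρ ^ 2 / (2 * σ₀ * T ^ 3)) *
              (4 * α ^ 2 * σ₀ ^ 2 *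
                (exp (α ^ 2 * T) * T ^ 2 / (2 * α ^ 2) - exp (α ^ 2 * T) * T / α ^ 4
                  + (exp (α ^ 2 * T) - 1) / α ^ 6))
          + (ρ / (4 * T ^ 2)) *
              (2 * α * σ₀ ^ 2 *
                (exp (α ^ 2 * T) * T / α ^ 2 - (exp (α ^ 2 * T) - 1) / α ^ 4)))
      (nhdsWithin 0 (Set.Ioi 0)) (nhds (ρ * α * σ₀ ^ 2 / 4))) ∧
    (ρ < 0 → ρ * α * σ₀ ^ 2 / 4 < 0) := by
  refine ⟨?_, fun hρ ↦ by nlinarith [mul_pos hα (pow_pos hσ 2)]⟩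
  show Tendsto (fun T ↦ 3 * ρ ^ 2 / (8 * σ₀ ^ 3 * T ^ 4) * SABR.A α σ₀ T
      - ρ ^ 2 / (2 * σ₀ ^ 2 * T ^ 3) * SABR.B α σ₀ T - ρ ^ 2 / (2 * σ₀ * T ^ 3) * SABR.C α σ₀ T
      + ρ / (4 * T ^ 2) * SABR.D α σ₀ T) _ _
  have hlim := ((((SABR.tendsto_A_div_pow_four hα.ne' σ₀).const_mul (3 * ρ ^ 2 / (8 * σ₀ ^ 3))).sub
    ((SABR.tendsto_B_div_pow_three hα.ne' σ₀).const_mul (ρ ^ 2 / (2 * σ₀ ^ 2)))).sub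
    ((SABR.tendsto_C_div_pow_three hα.ne' σ₀).const_mul (ρ ^ 2 / (2 * σ₀)))).add
    ((SABR.tendsto_D_div_sq hα.ne' σ₀).const_mul (ρ / 4))
  have hval : 3 * ρ ^ 2 / (8 * σ₀ ^ 3) * (4 * α ^ 2 * σ₀ ^ 4 / 3)
      - ρ ^ 2 / (2 * σ₀ ^ 2) * (α ^ 2 * σ₀ ^ 3 / 3) - ρ ^ 2 / (2 * σ₀) * (2 * α ^ 2 * σ₀ ^ 2 / 3)
      + ρ / 4 * (α * σ₀ ^ 2) = ρ * α * σ₀ ^ 2 / 4 := by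
    field_simp
    ring
  rw [hval] at hlim
  exact (hlim.mono_left (nhdsGT_le_nhdsNE 0)).congr fun T ↦ by ring
end

section
/- Let α > 0, σ₀ > 0 and ρ ∈ ℝ. With A(T) = 4α²σ₀⁴·( e^{6α²T}T³/(12α²) + T²/(36α⁴) − (e^{6α²T}−1)T/(216α⁶) ), B(T) = 2α²σ₀³·( e^{3α²T}T/(2α⁴) − (e^{3α²T}−e^{α²T})/(4α⁶) − e^{3α²T}T/(3α⁴) + (e^{3α²T}−1)/(9α⁶) ), and C(T) = 4α²σ₀²·( e^{α²T}T²/(2α²) − e^{α²T}T/α⁴ + (e^{α²T}−1)/α⁶ ), one has lim_{T→0⁺} [ (3ρ²/(8σ₀³T⁴))·A(T) − (ρ²/(2σ₀²T³))·B(T) − (ρ²/(2σ₀T³))·C(T) ] = 0; equivalently, (3ρ²/(8σ₀³))·(4α²σ₀⁴/3) − (ρ²/(2σ₀²))·(α²σ₀³/3) − (ρ²/(2σ₀))·(2α²σ₀²/3) = 0. -/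
/-!
Expanding `exp` to third order at `0` gives `A(T) = (4/3) α² σ₀⁴ T⁴ + o(T⁴)`,
`B(T) = (1/3) α² σ₀³ T³ + o(T³)` and `C(T) = (2/3) α² σ₀² T³ + o(T³)`. The limit is therefore the
same combination of these leading coefficients, which is `ρ² α² σ₀ (1/2 - 1/6 - 1/3) = 0`.
-/

open Real Filter Topology

noncomputable section

def expCubicRem (x : ℝ) : ℝ :=
  (exp x - (1 + x + x ^ 2 / 2 + x ^ 3 / 6)) / x ^ 3

theorem exp_eq_cubic_add_expCubicRem (x : ℝ) :
    exp x = 1 + x + x ^ 2 / 2 + x ^ 3 / 6 + x ^ 3 * expCubicRem x := by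
  rcases eq_or_ne x 0 with rfl | hx
  · simp
  · rw [expCubicRem]
    field_simp
    ring

-- `5 / 96 = 5 / (4! * 4)` is the constant of `Real.exp_bound` for `n = 4`.
theorem abs_expCubicRem_le {x : ℝ} (hx : |x| ≤ 1) : |expCubicRem x| ≤ 5 / 96 * |x| := by
  rcases eq_or_ne x 0 with rfl | hx0
  · simp [expCubicRem]
  have hbound := Real.exp_bound hx (n := 4) (by norm_num)
  norm_num [Finset.sum_range_succ, Nat.factorial] at hbound
  rw [expCubicRem, abs_div, abs_pow, div_le_iff₀ (by positivity)]
  calc |exp x - (1 + x + x ^ 2 / 2 + x ^ 3 / 6)| ≤ |x| ^ 4 * (5 / 96) := by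
        convert hbound using 3
    _ = 5 / 96 * |x| * |x| ^ 3 := by ring

@[fun_prop]
theorem continuous_expCubicRem : Continuous expCubicRem := by
  rw [continuous_iff_continuousAt]
  intro x
  rcases eq_or_ne x 0 with rfl | hx
  · have hsmall : ∀ᶠ y in 𝓝 (0 : ℝ), |y| ≤ 1 := by
      filter_upwards [Metric.closedBall_mem_nhds (0 : ℝ) one_pos] with y hy
      simpa using hy
    have hlin : Tendsto (fun y : ℝ => 5 / 96 * |y|) (𝓝 0) (𝓝 0) := by
      simpa using (continuous_abs.tendsto (0 : ℝ)).const_mul (5 / 96 : ℝ)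
    simp only [ContinuousAt, show expCubicRem 0 = 0 by simp [expCubicRem]]
    exact squeeze_zero_norm' (hsmall.mono fun y hy => abs_expCubicRem_le hy) hlin
  · unfold expCubicRem
    fun_prop (disch := positivity)

/- The closed forms of the upper bound for `T₁` and of `T₂`, `T₃` in Theorem 4 of
Alòs–Rolloos–Shiraya. -/
def sabrA (α σ₀ T : ℝ) : ℝ :=
  4 * α ^ 2 * σ₀ ^ 4 *
    (exp (6 * α ^ 2 * T) * T ^ 3 / (12 * α ^ 2) + T ^ 2 / (36 * α ^ 4)
      - (exp (6 * α ^ 2 * T) - 1) * T / (216 * α ^ 6))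

def sabrB (α σ₀ T : ℝ) : ℝ :=
  2 * α ^ 2 * σ₀ ^ 3 *
    (exp (3 * α ^ 2 * T) * T / (2 * α ^ 4)
      - (exp (3 * α ^ 2 * T) - exp (α ^ 2 * T)) / (4 * α ^ 6)
      - exp (3 * α ^ 2 * T) * T / (3 * α ^ 4)
      + (exp (3 * α ^ 2 * T) - 1) / (9 * α ^ 6))

def sabrC (α σ₀ T : ℝ) : ℝ :=
  4 * α ^ 2 * σ₀ ^ 2 *
    (exp (α ^ 2 * T) * T ^ 2 / (2 * α ^ 2) - exp (α ^ 2 * T) * T / α ^ 4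
      + (exp (α ^ 2 * T) - 1) / α ^ 6)

section

variable {α : ℝ} (σ₀ : ℝ)

theorem sabrA_div_pow_four (hα : α ≠ 0) {T : ℝ} (hT : T ≠ 0) :
    sabrA α σ₀ T / T ^ 4 = 4 * α ^ 2 * σ₀ ^ 4 * (1 / 3 + 3 * (α ^ 2 * T) / 2 + 3 * (α ^ 2 * T) ^ 2
      + (18 * (α ^ 2 * T) ^ 2 - 1) * expCubicRem (6 * α ^ 2 * T)) := by
  rw [sabrA, exp_eq_cubic_add_expCubicRem (6 * α ^ 2 * T)]
  field_simp
  ring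

theorem sabrB_div_pow_three (hα : α ≠ 0) {T : ℝ} (hT : T ≠ 0) :
    sabrB α σ₀ T / T ^ 3 = 2 * α ^ 2 * σ₀ ^ 3 * (1 / 6 + 3 * (α ^ 2 * T) / 4
      + (9 * (α ^ 2 * T) / 2 - 15 / 4) * expCubicRem (3 * α ^ 2 * T)
      + expCubicRem (α ^ 2 * T) / 4) := by
  rw [sabrB, exp_eq_cubic_add_expCubicRem (3 * α ^ 2 * T),
    exp_eq_cubic_add_expCubicRem (α ^ 2 * T)]
  field_simp
  ring

theorem sabrC_div_pow_three (hα : α ≠ 0) {T : ℝ} (hT : T ≠ 0) :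
    sabrC α σ₀ T / T ^ 3 = 4 * α ^ 2 * σ₀ ^ 2 * (1 / 6 + (α ^ 2 * T) / 12 + (α ^ 2 * T) ^ 2 / 12
      + (1 - α ^ 2 * T + (α ^ 2 * T) ^ 2 / 2) * expCubicRem (α ^ 2 * T)) := by
  rw [sabrC, exp_eq_cubic_add_expCubicRem (α ^ 2 * T)]
  field_simp
  ring

theorem tendsto_sabrA_div_pow_four (hα : α ≠ 0) :
    Tendsto (fun T => sabrA α σ₀ T / T ^ 4) (𝓝[≠] 0) (𝓝 (4 * α ^ 2 * σ₀ ^ 4 / 3)) := by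
  rw [tendsto_congr' (eventually_nhdsWithin_of_forall fun T (hT : T ∈ ({0}ᶜ : Set ℝ)) =>
    sabrA_div_pow_four σ₀ hα hT)]
  exact (Continuous.tendsto' (by fun_prop) _ _ (by simp [expCubicRem]; ring)).mono_left
    nhdsWithin_le_nhds

theorem tendsto_sabrB_div_pow_three (hα : α ≠ 0) :
    Tendsto (fun T => sabrB α σ₀ T / T ^ 3) (𝓝[≠] 0) (𝓝 (α ^ 2 * σ₀ ^ 3 / 3)) := by
  rw [tendsto_congr' (eventually_nhdsWithin_of_forall fun T (hT : T ∈ ({0}ᶜ : Set ℝ)) =>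
    sabrB_div_pow_three σ₀ hα hT)]
  exact (Continuous.tendsto' (by fun_prop) _ _ (by simp [expCubicRem]; ring)).mono_left
    nhdsWithin_le_nhds

theorem tendsto_sabrC_div_pow_three (hα : α ≠ 0) :
    Tendsto (fun T => sabrC α σ₀ T / T ^ 3) (𝓝[≠] 0) (𝓝 (2 * α ^ 2 * σ₀ ^ 2 / 3)) := by
  rw [tendsto_congr' (eventually_nhdsWithin_of_forall fun T (hT : T ∈ ({0}ᶜ : Set ℝ)) =>
    sabrC_div_pow_three σ₀ hα hT)]
  exact (Continuous.tendsto' (by fun_prop) _ _ (by simp [expCubicRem]; ring)).mono_left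
    nhdsWithin_le_nhds

end

end

theorem ZVIV_lower_bound_limit_general (α σ₀ ρ : ℝ) (hα : 0 < α) :
    (Tendsto
      (fun T : ℝ =>
        (3 * ρ ^ 2 / (8 * σ₀ ^ 3 * T ^ 4)) *
            (4 * α ^ 2 * σ₀ ^ 4 *
              (exp (6 * α ^ 2 * T) * T ^ 3 / (12 * α ^ 2) + T ^ 2 / (36 * α ^ 4)
                - (exp (6 * α ^ 2 * T) - 1) * T / (216 * α ^ 6)))
          - (ρ ^ 2 / (2 * σ₀ ^ 2 * T ^ 3)) *
              (2 * α ^ 2 * σ₀ ^ 3 *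
                (exp (3 * α ^ 2 * T) * T / (2 * α ^ 4)
                  - (exp (3 * α ^ 2 * T) - exp (α ^ 2 * T)) / (4 * α ^ 6)
                  - exp (3 * α ^ 2 * T) * T / (3 * α ^ 4)
                  + (exp (3 * α ^ 2 * T) - 1) / (9 * α ^ 6)))
          - (ρ ^ 2 / (2 * σ₀ * T ^ 3)) *
              (4 * α ^ 2 * σ₀ ^ 2 *
                (exp (α ^ 2 * T) * T ^ 2 / (2 * α ^ 2) - exp (α ^ 2 * T) * T / α ^ 4
                  + (exp (α ^ 2 * T) - 1) / α ^ 6)))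
      (nhdsWithin 0 (Set.Ioi 0)) (nhds 0)) ∧
    (3 * ρ ^ 2 / (8 * σ₀ ^ 3)) * (4 * α ^ 2 * σ₀ ^ 4 / 3)
        - (ρ ^ 2 / (2 * σ₀ ^ 2)) * (α ^ 2 * σ₀ ^ 3 / 3)
        - (ρ ^ 2 / (2 * σ₀)) * (2 * α ^ 2 * σ₀ ^ 2 / 3) = 0 := by
  have hcancel : (3 * ρ ^ 2 / (8 * σ₀ ^ 3)) * (4 * α ^ 2 * σ₀ ^ 4 / 3)
      - (ρ ^ 2 / (2 * σ₀ ^ 2)) * (α ^ 2 * σ₀ ^ 3 / 3)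
      - (ρ ^ 2 / (2 * σ₀)) * (2 * α ^ 2 * σ₀ ^ 2 / 3) = 0 := by
    field_simp
    ring
  refine ⟨?_, hcancel⟩
  have hlim := (((tendsto_sabrA_div_pow_four σ₀ hα.ne').const_mul (3 * ρ ^ 2 / (8 * σ₀ ^ 3))).sub
    ((tendsto_sabrB_div_pow_three σ₀ hα.ne').const_mul (ρ ^ 2 / (2 * σ₀ ^ 2)))).sub
    ((tendsto_sabrC_div_pow_three σ₀ hα.ne').const_mul (ρ ^ 2 / (2 * σ₀)))
  rw [hcancel] at hlim
  refine (hlim.mono_left (nhdsWithin_mono 0 fun T (hT : 0 < T) => hT.ne')).congr fun T => ?_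
  simp only [sabrA, sabrB, sabrC]
  ring

theorem ZVIV_lower_bound_limit (α σ₀ ρ : ℝ) (hα : 0 < α) (hσ : 0 < σ₀) :
    (Tendsto
      (fun T : ℝ =>
        (3 * ρ ^ 2 / (8 * σ₀ ^ 3 * T ^ 4)) *
            (4 * α ^ 2 * σ₀ ^ 4 *
              (exp (6 * α ^ 2 * T) * T ^ 3 / (12 * α ^ 2) + T ^ 2 / (36 * α ^ 4)
                - (exp (6 * α ^ 2 * T) - 1) * T / (216 * α ^ 6)))
          - (ρ ^ 2 / (2 * σ₀ ^ 2 * T ^ 3)) *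
              (2 * α ^ 2 * σ₀ ^ 3 *
                (exp (3 * α ^ 2 * T) * T / (2 * α ^ 4)
                  - (exp (3 * α ^ 2 * T) - exp (α ^ 2 * T)) / (4 * α ^ 6)
                  - exp (3 * α ^ 2 * T) * T / (3 * α ^ 4)
                  + (exp (3 * α ^ 2 * T) - 1) / (9 * α ^ 6)))
          - (ρ ^ 2 / (2 * σ₀ * T ^ 3)) *
              (4 * α ^ 2 * σ₀ ^ 2 *
                (exp (α ^ 2 * T) * T ^ 2 / (2 * α ^ 2) - exp (α ^ 2 * T) * T / α ^ 4
                  + (exp (α ^ 2 * T) - 1) / α ^ 6)))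
      (nhdsWithin 0 (Set.Ioi 0)) (nhds 0)) ∧
    (3 * ρ ^ 2 / (8 * σ₀ ^ 3)) * (4 * α ^ 2 * σ₀ ^ 4 / 3)
        - (ρ ^ 2 / (2 * σ₀ ^ 2)) * (α ^ 2 * σ₀ ^ 3 / 3)
        - (ρ ^ 2 / (2 * σ₀)) * (2 * α ^ 2 * σ₀ ^ 2 / 3) = 0 :=
  ZVIV_lower_bound_limit_general α σ₀ ρ hα
end
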